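/- Let p, q be nonzero vectors in ℝ³ and let d be a unit vector orthogonal to p. Then |⟨d, q/‖q‖⟩| ≤ ‖p − q‖ / min(‖p‖, ‖q‖). -/

import Mathlib

open scoped RealInnerProductSpace

theorem abs_inner_le_mul_norm_sub_of_inner_eq_zero {E : Type*} [NormedAddCommGroup E]
    [InnerProductSpace ℝ E] {d p : E} (q : E) (hdp : ⟪d, p⟫ = 0) :
    |⟪d, q⟫| ≤ ‖d‖ * ‖p - q‖ :=
  calc |⟪d, q⟫| = |⟪d, q - p⟫| := by rw [inner_sub_right, hdp, sub_zero]
    _ ≤ ‖d‖ * ‖q - p‖ := abs_real_inner_le_norm _ _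
    _ = ‖d‖ * ‖p - q‖ := by rw [norm_sub_rev]

-- The case `b = 0` holds only because `0⁻¹ = 0`.
theorem inv_le_inv_min_of_pos {α : Type*} [Field α] [LinearOrder α] [IsStrictOrderedRing α]
    {a b : α} (ha : 0 < a) (hb : 0 ≤ b) : b⁻¹ ≤ (min a b)⁻¹ := by
  rcases hb.eq_or_lt with rfl | hb
  · simp [ha.le]
  · exact inv_anti₀ (lt_min ha hb) (min_le_right a b)

theorem abs_inner_unit_orthogonal_normalize_le_general
    (p q d : EuclideanSpace ℝ (Fin 3)) (hp : p ≠ 0)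
    (hd : ‖d‖ = 1) (hdp : (inner ℝ d p : ℝ) = 0) :
    |(inner ℝ d (‖q‖⁻¹ • q) : ℝ)| ≤ ‖p - q‖ / min ‖p‖ ‖q‖ := by
  have hdq : |⟪d, q⟫| ≤ ‖p - q‖ := by
    simpa [hd] using abs_inner_le_mul_norm_sub_of_inner_eq_zero q hdp
  rw [real_inner_smul_right, abs_mul, abs_inv, abs_norm, div_eq_inv_mul]
  exact mul_le_mul (inv_le_inv_min_of_pos (norm_pos_iff.mpr hp) (norm_nonneg q)) hdq
    (abs_nonneg _) (inv_nonneg.mpr (le_min (norm_nonneg p) (norm_nonneg q)))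

/-- Let `p, q` be nonzero vectors in `ℝ³` and let `d` be a unit vector orthogonal to `p`.
Then `|⟨d, q/‖q‖⟩| ≤ ‖p − q‖ / min (‖p‖, ‖q‖)`. -/
theorem abs_inner_unit_orthogonal_normalize_le
    (p q d : EuclideanSpace ℝ (Fin 3)) (hp : p ≠ 0) (hq : q ≠ 0)
    (hd : ‖d‖ = 1) (hdp : (inner ℝ d p : ℝ) = 0) :
    |(inner ℝ d (‖q‖⁻¹ • q) : ℝ)| ≤ ‖p - q‖ / min ‖p‖ ‖q‖ :=
  abs_inner_unit_orthogonal_normalize_le_general p q d hp hd hdp
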